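/- arXiv:1504.05103 — 5 statements merged into one kernel-verified Lean document; each statement's English description precedes it below -/
import Mathlib

section
/- Let I ≥ 0 and T_Q ≥ 0 be independent random variables with finite second moments, and define W = max(T_Q - I, 0). Then E[I·W] ≤ E[I]·E[W] + E[I]². -/
open MeasureTheory ProbabilityTheory

/-! Since `0 ≤ I`, the waiting time satisfies `W ≤ T_Q ≤ W + I`. Hence
`E[I W] ≤ E[I T_Q] = E[I] E[T_Q] ≤ E[I] (E[W] + E[I])`, the middle equality by independence. -/

namespace ProbabilityTheory

theorem IndepFun.integral_mul_le_mul_integral_of_le {Ω : Type*} [MeasurableSpace Ω]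
    {μ : Measure Ω} {X Y Z : Ω → ℝ} (hXY : IndepFun X Y μ) (hX : 0 ≤ᵐ[μ] X)
    (hZ : 0 ≤ᵐ[μ] Z) (hZY : Z ≤ᵐ[μ] Y) (hXi : Integrable X μ) (hYi : Integrable Y μ) :
    ∫ ω, X ω * Z ω ∂μ ≤ (∫ ω, X ω ∂μ) * ∫ ω, Y ω ∂μ := by
  calc ∫ ω, X ω * Z ω ∂μ ≤ ∫ ω, X ω * Y ω ∂μ := by
        refine integral_mono_of_nonneg ?_ (hXY.integrable_mul hXi hYi) ?_
        · filter_upwards [hX, hZ] with ω hXω hZω using mul_nonneg hXω hZω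
        · filter_upwards [hX, hZY] with ω hXω hZYω using mul_le_mul_of_nonneg_left hZYω hXω
    _ = (∫ ω, X ω ∂μ) * ∫ ω, Y ω ∂μ :=
        hXY.integral_fun_mul_eq_mul_integral hXi.aestronglyMeasurable hYi.aestronglyMeasurable

end ProbabilityTheory

theorem stmt2_general {Ω : Type*} [MeasureSpace Ω] [IsProbabilityMeasure (ℙ : Measure Ω)]
    (I TQ : Ω → ℝ)
    (hInn : ∀ ω, 0 ≤ I ω) (hTQnn : ∀ ω, 0 ≤ TQ ω)
    (hind : IndepFun I TQ)
    (hIint : Integrable I)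
    (hTQint : Integrable TQ)
    (W : Ω → ℝ) (hW : W = fun ω => max (TQ ω - I ω) 0) :
    (∫ ω, I ω * W ω) ≤ (∫ ω, I ω) * (∫ ω, W ω) + (∫ ω, I ω) ^ 2 := by
  have hWint : Integrable W := hW ▸ (hTQint.sub hIint).pos_part
  have hW_nonneg : ∀ ω, 0 ≤ W ω := fun ω => hW ▸ le_max_right _ _
  have hW_le_TQ : ∀ ω, W ω ≤ TQ ω := fun ω => hW ▸ max_le (by linarith [hInn ω]) (hTQnn ω)
  have hTQ_le : ∀ ω, TQ ω ≤ W ω + I ω := fun ω => by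
    simp only [hW]
    linarith [le_max_left (TQ ω - I ω) 0]
  have hETQ_le : ∫ ω, TQ ω ≤ (∫ ω, W ω) + ∫ ω, I ω := by
    rw [← integral_add hWint hIint]
    exact integral_mono hTQint (hWint.add hIint) hTQ_le
  calc (∫ ω, I ω * W ω)
      ≤ (∫ ω, I ω) * ∫ ω, TQ ω :=
        hind.integral_mul_le_mul_integral_of_le (ae_of_all _ hInn) (ae_of_all _ hW_nonneg)
          (ae_of_all _ hW_le_TQ) hIint hTQint
    _ ≤ (∫ ω, I ω) * ((∫ ω, W ω) + ∫ ω, I ω) :=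
        mul_le_mul_of_nonneg_left hETQ_le (integral_nonneg hInn)
    _ = (∫ ω, I ω) * (∫ ω, W ω) + (∫ ω, I ω) ^ 2 := by ring

/-- For independent nonnegative random variables `I, T_Q` with finite
second moments and `W = max(T_Q - I, 0)`, we have `E[I·W] ≤ E[I]·E[W] + E[I]²`. -/
theorem stmt2 {Ω : Type*} [MeasureSpace Ω] [IsProbabilityMeasure (ℙ : Measure Ω)]
    (I TQ : Ω → ℝ) (hImeas : Measurable I) (hTQmeas : Measurable TQ)
    (hInn : ∀ ω, 0 ≤ I ω) (hTQnn : ∀ ω, 0 ≤ TQ ω)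
    (hind : IndepFun I TQ)
    (hIint : Integrable I) (hI2 : Integrable (fun ω => I ω ^ 2))
    (hTQint : Integrable TQ)
    (W : Ω → ℝ) (hW : W = fun ω => max (TQ ω - I ω) 0)
    (hWint : Integrable W) (hIW : Integrable (fun ω => I ω * W ω)) :
    (∫ ω, I ω * W ω) ≤ (∫ ω, I ω) * (∫ ω, W ω) + (∫ ω, I ω) ^ 2 :=
  stmt2_general I TQ hInn hTQnn hind hIint hTQint W hW
end

section
/- Let I ≥ 0 and T_Q ≥ 0 be independent random variables with finite second moments, and define W = max(T_Q - I, 0). Then E[I·W] ≥ E[I]·E[W] - 2·E[I²]. -/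
open MeasureTheory ProbabilityTheory

theorem mul_le_mul_max_sub_zero_add_sq {i t : ℝ} (hi : 0 ≤ i) :
    i * t ≤ i * max (t - i) 0 + i ^ 2 := by
  nlinarith [le_max_left (t - i) 0]

theorem integral_mul_le_integral_mul_max_sub_zero_add {Ω : Type*} [MeasurableSpace Ω]
    {μ : Measure Ω} {I T : Ω → ℝ} (hI : ∀ ω, 0 ≤ I ω)
    (hIT : Integrable (fun ω => I ω * T ω) μ)
    (hIW : Integrable (fun ω => I ω * max (T ω - I ω) 0) μ)
    (hI2 : Integrable (fun ω => I ω ^ 2) μ) :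
    ∫ ω, I ω * T ω ∂μ ≤ ∫ ω, I ω * max (T ω - I ω) 0 ∂μ + ∫ ω, I ω ^ 2 ∂μ := by
  rw [← integral_add hIW hI2]
  exact integral_mono hIT (hIW.add hI2) fun ω => mul_le_mul_max_sub_zero_add_sq (hI ω)

theorem stmt3_general {Ω : Type*} [MeasureSpace Ω] [IsProbabilityMeasure (ℙ : Measure Ω)]
    (I TQ : Ω → ℝ)
    (hInn : ∀ ω, 0 ≤ I ω) (hTQnn : ∀ ω, 0 ≤ TQ ω)
    (hind : IndepFun I TQ)
    (hIint : Integrable I) (hI2 : Integrable (fun ω => I ω ^ 2))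
    (hTQint : Integrable TQ)
    (W : Ω → ℝ) (hW : W = fun ω => max (TQ ω - I ω) 0)
    (hWint : Integrable W) (hIW : Integrable (fun ω => I ω * W ω)) :
    (∫ ω, I ω) * (∫ ω, W ω) - 2 * (∫ ω, (I ω) ^ 2) ≤ ∫ ω, I ω * W ω := by
  subst hW
  have hW_le_TQ : ∫ ω, max (TQ ω - I ω) 0 ≤ ∫ ω, TQ ω :=
    integral_mono hWint hTQint fun ω => max_le (by linarith [hInn ω]) (hTQnn ω)
  have hI_nonneg : 0 ≤ ∫ ω, I ω := integral_nonneg hInn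
  have hI2_nonneg : 0 ≤ ∫ ω, I ω ^ 2 := integral_nonneg fun ω => sq_nonneg _
  calc (∫ ω, I ω) * (∫ ω, max (TQ ω - I ω) 0) - 2 * ∫ ω, I ω ^ 2
      ≤ (∫ ω, I ω) * (∫ ω, TQ ω) - ∫ ω, I ω ^ 2 := by
        linarith [mul_le_mul_of_nonneg_left hW_le_TQ hI_nonneg]
    _ = (∫ ω, I ω * TQ ω) - ∫ ω, I ω ^ 2 := by
        rw [hind.integral_fun_mul_eq_mul_integral hIint.aestronglyMeasurable
          hTQint.aestronglyMeasurable]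
    _ ≤ ∫ ω, I ω * max (TQ ω - I ω) 0 :=
        sub_le_iff_le_add.mpr <| integral_mul_le_integral_mul_max_sub_zero_add hInn
          (hind.integrable_mul hIint hTQint) hIW hI2

/-- For independent nonnegative random variables `I, T_Q` with finite
second moments and `W = max(T_Q - I, 0)`, we have `E[I·W] ≥ E[I]·E[W] - 2·E[I²]`. -/
theorem stmt3 {Ω : Type*} [MeasureSpace Ω] [IsProbabilityMeasure (ℙ : Measure Ω)]
    (I TQ : Ω → ℝ) (hImeas : Measurable I) (hTQmeas : Measurable TQ)
    (hInn : ∀ ω, 0 ≤ I ω) (hTQnn : ∀ ω, 0 ≤ TQ ω)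
    (hind : IndepFun I TQ)
    (hIint : Integrable I) (hI2 : Integrable (fun ω => I ω ^ 2))
    (hTQint : Integrable TQ)
    (W : Ω → ℝ) (hW : W = fun ω => max (TQ ω - I ω) 0)
    (hWint : Integrable W) (hIW : Integrable (fun ω => I ω * W ω)) :
    (∫ ω, I ω) * (∫ ω, W ω) - 2 * (∫ ω, (I ω) ^ 2) ≤ ∫ ω, I ω * W ω :=
  stmt3_general I TQ hInn hTQnn hind hIint hI2 hTQint W hW hWint hIW
end

section
/- In the multi-class M/G/1/1 system, the quantities Z_{ji} defined by the system Z_{ii} = x_i and Z_{ji} = x_j + 1/λ + Σ_k (λ_k/λ)·Z_{ki} for j ≠ i (where λ = Σ_k λ_k) have the unique solution Z_{ji} = x_j + 1/λ_i + (Σ_k λ_k·x_k)/λ_i for j ≠ i. -/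
/-!
Fix the target class `i`. For `j ≠ i` the right-hand side `x j + 1/λ + Σ_k (λ_k/λ) Z_{ki}` differs
from `x j` by a constant `c` independent of `j`; substituting `Z_{ki} = x_k + c` (`k ≠ i`) and
`Z_{ii} = x_i` back into that constant gives `λ c = 1 + Σ_k λ_k x_k + (λ - λ_i) c`, i.e.
`c = (1 + Σ_k λ_k x_k) / λ_i`, which is the closed form. The argument is reversible.
-/

open Finset

variable {ι K : Type*} [Fintype ι] [DecidableEq ι]

lemma sum_mul_eq_of_eq_add_of_ne [CommRing K] (lam x W : ι → K) (i : ι) (c : K)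
    (hWi : W i = x i) (hW : ∀ k ≠ i, W k = x k + c) :
    ∑ k, lam k * W k = ∑ k, lam k * x k + (∑ k, lam k - lam i) * c := by
  calc ∑ k, lam k * W k = ∑ k, lam k * x k + ∑ k, lam k * (W k - x k) := by
        simp only [mul_sub, sum_sub_distrib, add_sub_cancel]
    _ = ∑ k, lam k * x k + ∑ k ∈ univ.erase i, lam k * c := by
        rw [← sum_erase univ (f := fun k => lam k * (W k - x k)) (a := i) (by simp [hWi])]
        congr 1
        refine sum_congr rfl fun k hk => ?_
        rw [hW k (ne_of_mem_erase hk), add_sub_cancel_left]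
    _ = ∑ k, lam k * x k + (∑ k, lam k - lam i) * c := by
        rw [← sum_mul, sum_erase_eq_sub (mem_univ i)]

-- `W k` stands for `Z_{ki}`, the column of a fixed target class `i`.
lemma fixedPoint_column_iff [Field K] (lam x W : ι → K) (i : ι) (hWi : W i = x i)
    (hlamTot : ∑ k, lam k ≠ 0) (hlami : lam i ≠ 0) :
    (∀ j ≠ i, W j = x j + 1 / ∑ k, lam k + ∑ k, lam k / (∑ k, lam k) * W k) ↔
      ∀ j ≠ i, W j = x j + 1 / lam i + (∑ k, lam k * x k) / lam i := by
  set Λ := ∑ k, lam k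
  have hsum (c : K) (hW : ∀ k ≠ i, W k = x k + c) :
      1 / Λ + ∑ k, lam k / Λ * W k = c + (1 + ∑ k, lam k * x k - lam i * c) / Λ := by
    simp only [div_mul_eq_mul_div, ← sum_div, sum_mul_eq_of_eq_add_of_ne lam x W i c hWi hW]
    field_simp
    ring
  constructor
  · intro hW j hj
    obtain ⟨c, hc⟩ : ∃ c, c = 1 / Λ + ∑ k, lam k / Λ * W k := ⟨_, rfl⟩
    have hWc : ∀ k ≠ i, W k = x k + c := fun k hk => by rw [hW k hk, add_assoc, hc]
    have hfix : lam i * c = 1 + ∑ k, lam k * x k := by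
      have := hsum c hWc
      rw [← hc, left_eq_add, div_eq_zero_iff, or_iff_left hlamTot, sub_eq_zero] at this
      exact this.symm
    rw [hWc j hj, add_assoc, ← add_div, ← hfix, mul_div_cancel_left₀ _ hlami]
  · intro hW j hj
    have hfix : lam i * (1 / lam i + (∑ k, lam k * x k) / lam i) = 1 + ∑ k, lam k * x k := by
      field_simp
    rw [add_assoc, hsum _ fun k hk => by rw [hW k hk, add_assoc], hfix, sub_self, zero_div,
      add_zero, hW j hj, add_assoc]

theorem stmt7_general (N : ℕ) (lam x : Fin N → ℝ)
    (hlam : ∀ k, 0 < lam k)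
    (lamTot : ℝ) (hlamTot : lamTot = ∑ k, lam k)
    (Zc : Fin N → Fin N → ℝ)
    (hZc : ∀ j i, Zc j i =
      if j = i then x i else x j + 1 / lam i + (∑ k, lam k * x k) / lam i) :
    ((∀ i, Zc i i = x i) ∧
      (∀ j i, j ≠ i →
        Zc j i = x j + 1 / lamTot + ∑ k, (lam k / lamTot) * Zc k i)) ∧
    (∀ Z : Fin N → Fin N → ℝ,
      (∀ i, Z i i = x i) →
      (∀ j i, j ≠ i →
        Z j i = x j + 1 / lamTot + ∑ k, (lam k / lamTot) * Z k i) →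
      ∀ j i, j ≠ i → Z j i = x j + 1 / lam i + (∑ k, lam k * x k) / lam i) := by
  subst hlamTot
  have hlamTot_ne (i : Fin N) : ∑ k, lam k ≠ 0 :=
    (lt_of_lt_of_le (hlam i) (single_le_sum (fun k _ => (hlam k).le) (mem_univ i))).ne'
  have hdiag (i : Fin N) : Zc i i = x i := by simp [hZc]
  refine ⟨⟨hdiag, fun j i hji => ?_⟩, fun Z hZdiag hZ j i => ?_⟩
  · exact (fixedPoint_column_iff lam x (Zc · i) i (hdiag i) (hlamTot_ne i) (hlam i).ne').2
      (fun k hk => by simp [hZc, hk]) j hji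
  · exact (fixedPoint_column_iff lam x (Z · i) i (hZdiag i) (hlamTot_ne i) (hlam i).ne').1
      (fun k hk => hZ k i hk) j

/-- In the multi-class M/G/1/1 system, the system of equations
`Z_{ii} = x_i`, `Z_{ji} = x_j + 1/λ + Σ_k (λ_k/λ)·Z_{ki}` (j ≠ i), with
`λ = Σ_k λ_k`, has the unique solution `Z_{ji} = x_j + 1/λ_i + (Σ_k λ_k x_k)/λ_i`
for `j ≠ i`: the closed form satisfies the equations, and any solution equals it. -/
theorem stmt7 (N : ℕ) (hN : 1 ≤ N) (lam x : Fin N → ℝ)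
    (hlam : ∀ k, 0 < lam k) (hx : ∀ k, 0 < x k)
    (lamTot : ℝ) (hlamTot : lamTot = ∑ k, lam k)
    (Zc : Fin N → Fin N → ℝ)
    (hZc : ∀ j i, Zc j i =
      if j = i then x i else x j + 1 / lam i + (∑ k, lam k * x k) / lam i) :
    ((∀ i, Zc i i = x i) ∧
      (∀ j i, j ≠ i →
        Zc j i = x j + 1 / lamTot + ∑ k, (lam k / lamTot) * Zc k i)) ∧
    (∀ Z : Fin N → Fin N → ℝ,
      (∀ i, Z i i = x i) →
      (∀ j i, j ≠ i →
        Z j i = x j + 1 / lamTot + ∑ k, (lam k / lamTot) * Z k i) →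
      ∀ j i, j ≠ i → Z j i = x j + 1 / lam i + (∑ k, lam k * x k) / lam i) :=
  stmt7_general N lam x hlam lamTot hlamTot Zc hZc
end

section
/- Suppose for each n, A_n(λ) ≤ B_n(λ) ≤ 2·A_n(λ) for all feasible λ, each C_n is nondecreasing with Lipschitz constant β_n, and λ*_B minimizes max_n C_n(B_n(λ)) while λ* minimizes max_n C_n(A_n(λ)). Let C_sys(λ) = max_n C_n(A_n(λ)) and C_sys(B; λ) = max_n C_n(B_n(λ)). Then C_sys(λ*) ≤ C_sys(B; λ*_B) ≤ C_sys(λ*) + max_n β_n·A_n(λ*). -/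
/-- Lemma 4 sandwich bound: if `A_n ≤ B_n ≤ 2A_n` on `Λ`, each `C_n`
is nondecreasing with Lipschitz constant `β_n`, `λ*` minimizes `max_n C_n(A_n(·))`
and `λ*_B` minimizes `max_n C_n(B_n(·))`, then
`max_n C_n(A_n(λ*)) ≤ max_n C_n(B_n(λ*_B)) ≤ max_n C_n(A_n(λ*)) + max_n β_n·A_n(λ*)`. -/
theorem stmt13 (d M : ℕ) (hM : 0 < M) (Λ : Set (Fin d → ℝ))
    (A B : Fin M → (Fin d → ℝ) → ℝ)
    (hApos : ∀ n, ∀ l ∈ Λ, 0 ≤ A n l)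
    (hAB : ∀ n, ∀ l ∈ Λ, A n l ≤ B n l ∧ B n l ≤ 2 * A n l)
    (C : Fin M → ℝ → ℝ) (hC : ∀ n, Monotone (C n))
    (β : Fin M → ℝ) (hβ : ∀ n a b, |C n a - C n b| ≤ β n * |a - b|)
    (lstar lB : Fin d → ℝ) (hlstar : lstar ∈ Λ) (hlB : lB ∈ Λ)
    (hmin : ∀ l ∈ Λ,
      Finset.univ.sup' ⟨⟨0, hM⟩, Finset.mem_univ _⟩ (fun n => C n (A n lstar)) ≤
      Finset.univ.sup' ⟨⟨0, hM⟩, Finset.mem_univ _⟩ (fun n => C n (A n l)))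
    (hminB : ∀ l ∈ Λ,
      Finset.univ.sup' ⟨⟨0, hM⟩, Finset.mem_univ _⟩ (fun n => C n (B n lB)) ≤
      Finset.univ.sup' ⟨⟨0, hM⟩, Finset.mem_univ _⟩ (fun n => C n (B n l))) :
    Finset.univ.sup' ⟨⟨0, hM⟩, Finset.mem_univ _⟩ (fun n => C n (A n lstar)) ≤
      Finset.univ.sup' ⟨⟨0, hM⟩, Finset.mem_univ _⟩ (fun n => C n (B n lB)) ∧
    Finset.univ.sup' ⟨⟨0, hM⟩, Finset.mem_univ _⟩ (fun n => C n (B n lB)) ≤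
      Finset.univ.sup' ⟨⟨0, hM⟩, Finset.mem_univ _⟩ (fun n => C n (A n lstar))
      + Finset.univ.sup' ⟨⟨0, hM⟩, Finset.mem_univ _⟩ (fun n => β n * A n lstar) := by

  have hne : (Finset.univ : Finset (Fin M)).Nonempty := ⟨⟨0, hM⟩, Finset.mem_univ _⟩
  constructor
  · calc Finset.univ.sup' hne (fun n => C n (A n lstar))
        ≤ Finset.univ.sup' hne (fun n => C n (A n lB)) := hmin lB hlB
      _ ≤ Finset.univ.sup' hne (fun n => C n (B n lB)) := by
          apply Finset.sup'_mono_fun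
          intro n _
          exact hC n (hAB n lB hlB).1
  · calc Finset.univ.sup' hne (fun n => C n (B n lB))
        ≤ Finset.univ.sup' hne (fun n => C n (B n lstar)) := hminB lstar hlstar
      _ ≤ Finset.univ.sup' hne (fun n => C n (A n lstar) + β n * A n lstar) := by
          apply Finset.sup'_mono_fun
          intro n _
          have hA := hApos n lstar hlstar
          have h1 := (hAB n lstar hlstar).1
          have h2 := (hAB n lstar hlstar).2
          have hlip := hβ n (B n lstar) (A n lstar)
          have habs : |B n lstar - A n lstar| = B n lstar - A n lstar := abs_of_nonneg (by linarith)
          rw [habs] at hlip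
          have hCB : C n (B n lstar) - C n (A n lstar) ≤ β n * (B n lstar - A n lstar) :=
            le_trans (le_abs_self _) hlip
          have hβpos : 0 ≤ β n := by
            have := hβ n 0 1
            have h0 : (0:ℝ) ≤ β n * |(0:ℝ) - 1| := le_trans (abs_nonneg _) this
            simpa using h0
          have hmul : β n * (B n lstar - A n lstar) ≤ β n * A n lstar := by
            apply mul_le_mul_of_nonneg_left _ hβpos
            linarith
          linarith
      _ ≤ Finset.univ.sup' hne (fun n => C n (A n lstar))
          + Finset.univ.sup' hne (fun n => β n * A n lstar) := by
          apply Finset.sup'_le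
          intro n _
          exact add_le_add (Finset.le_sup' (fun n => C n (A n lstar)) (Finset.mem_univ n)) (Finset.le_sup' (fun n => β n * A n lstar) (Finset.mem_univ n))
end

section
/- In the M/G/1/1 system, if all entities are identical (x_n = x and C_n = C for all n, with C : ℝ → ℝ nondecreasing), then the uniform rate vector λ_n = λ_max for all n minimizes max_n C(x + (1 + Σ_k λ_k·x)/λ_n) over the box [λ_min, λ_max]^N. -/
/-!
The minimum rate `λ_m = min_n λ_n` governs the largest peak age: since `∑ λ_k ≥ N λ_m`,
`A_m(λ) ≥ x + 1/λ_m + N x ≥ x + 1/λ_max + N x`, and the right-hand side is the common peak age of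
the uniform vector `λ_max`. Monotonicity of `C` carries this over to the costs.
-/

open Finset

/-- The peak age of information `A_n(λ)` of entity `n`, with mean service time `x`. -/
noncomputable def peakAoI {ι : Type*} [Fintype ι] (x : ℝ) (lam : ι → ℝ) (n : ι) : ℝ :=
  x + (1 + x * ∑ k, lam k) / lam n

section PeakAoI

variable {ι : Type*} [Fintype ι] {x : ℝ}

lemma peakAoI_const {c : ℝ} (hc : c ≠ 0) (n : ι) :
    peakAoI x (fun _ => c) n = x + 1 / c + x * Fintype.card ι := by
  simp only [peakAoI, sum_const, card_univ, nsmul_eq_mul]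
  field_simp
  ring

lemma peakAoI_const_le_of_forall_le {lam : ι → ℝ} {m : ι} {c : ℝ} (hx : 0 ≤ x)
    (hm_pos : 0 < lam m) (hm_min : ∀ k, lam m ≤ lam k) (hm_le : lam m ≤ c) (n : ι) :
    peakAoI x (fun _ => c) n ≤ peakAoI x lam m := by
  have hsum : Fintype.card ι * lam m ≤ ∑ k, lam k := by
    simpa using card_nsmul_le_sum univ lam (lam m) fun k _ => hm_min k
  calc peakAoI x (fun _ => c) n
      = x + 1 / c + x * Fintype.card ι := peakAoI_const (hm_pos.trans_le hm_le).ne' n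
    _ ≤ x + 1 / lam m + x * Fintype.card ι := by gcongr
    _ = x + (1 + x * (Fintype.card ι * lam m)) / lam m := by field_simp; ring
    _ ≤ peakAoI x lam m := by unfold peakAoI; gcongr

end PeakAoI

theorem stmt17_general (N : ℕ) (hN : 0 < N) (x lmin lmax : ℝ)
    (hx : 0 < x) (hlmin : 0 < lmin)
    (C : ℝ → ℝ) (hC : Monotone C) :
    ∀ lam : Fin N → ℝ, (∀ k, lmin ≤ lam k ∧ lam k ≤ lmax) →
      Finset.univ.sup' ⟨⟨0, hN⟩, Finset.mem_univ _⟩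
        (fun n : Fin N => C (x + (1 + x * ∑ _k : Fin N, lmax) / lmax)) ≤
      Finset.univ.sup' ⟨⟨0, hN⟩, Finset.mem_univ _⟩
        (fun n : Fin N => C (x + (1 + x * ∑ k, lam k) / lam n)) := by
  intro lam hlam
  obtain ⟨m, -, hm_min⟩ := exists_min_image univ lam ⟨⟨0, hN⟩, mem_univ _⟩
  have hpeak : peakAoI x (fun _ => lmax) m ≤ peakAoI x lam m :=
    peakAoI_const_le_of_forall_le hx.le (hlmin.trans_le (hlam m).1)
      (fun k => hm_min k (mem_univ k)) (hlam m).2 m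
  exact (sup'_le _ _ fun _ _ => hC hpeak).trans
    (le_sup' (fun n => C (peakAoI x lam n)) (mem_univ m))

/-- In the M/G/1/1 system with identical entities (common mean
service time `x` and common nondecreasing cost `C`), the uniform rate vector
`λ_n = λ_max` minimizes `max_n C(A_n(λ))` over the box `[λ_min, λ_max]^N`. -/
theorem stmt17 (N : ℕ) (hN : 0 < N) (x lmin lmax : ℝ)
    (hx : 0 < x) (hlmin : 0 < lmin) (hle : lmin ≤ lmax)
    (C : ℝ → ℝ) (hC : Monotone C) :
    ∀ lam : Fin N → ℝ, (∀ k, lmin ≤ lam k ∧ lam k ≤ lmax) →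
      Finset.univ.sup' ⟨⟨0, hN⟩, Finset.mem_univ _⟩
        (fun n : Fin N => C (x + (1 + x * ∑ _k : Fin N, lmax) / lmax)) ≤
      Finset.univ.sup' ⟨⟨0, hN⟩, Finset.mem_univ _⟩
        (fun n : Fin N => C (x + (1 + x * ∑ k, lam k) / lam n)) :=
  stmt17_general N hN x lmin lmax hx hlmin C hC
end
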